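/- arXiv:0907.3801 — 2 statements merged into one kernel-verified Lean document; each statement's English description precedes it below -/
import Mathlib

section
/- For every finite graph G, the incidence chromatic number of G is at most the chromatic number of the square of G: χ_i(G) ≤ χ(G²). -/
open SimpleGraph

/-- The type of incidences of a graph `G`: pairs `(v, e)` where `e` is an edge of `G`
incident to the vertex `v`. -/
def Incidence {V : Type*} (G : SimpleGraph V) : Type _ :=
  {p : V × Sym2 V // p.2 ∈ G.edgeSet ∧ p.1 ∈ p.2}

/-- The graph on the incidences of `G` in which two distinct incidences `(v,e)` and `(w,f)`
are adjacent iff `v = w`, or `e = f`, or the edge `vw` equals `e` or `f`. -/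
def incidenceGraph {V : Type*} (G : SimpleGraph V) : SimpleGraph (Incidence G) where
  Adj i j := i ≠ j ∧
    (i.1.1 = j.1.1 ∨ i.1.2 = j.1.2 ∨ s(i.1.1, j.1.1) = i.1.2 ∨ s(i.1.1, j.1.1) = j.1.2)
  symm := by
    refine ⟨?_⟩
    rintro ⟨⟨v, e⟩, hi⟩ ⟨⟨w, f⟩, hj⟩ ⟨hne, h⟩
    refine ⟨fun h' => hne h'.symm, ?_⟩
    simp only at h ⊢
    rcases h with h | h | h | h
    · exact Or.inl h.symm
    · exact Or.inr (Or.inl h.symm)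
    · exact Or.inr (Or.inr (Or.inr ((Sym2.eq_swap).trans h)))
    · exact Or.inr (Or.inr (Or.inl ((Sym2.eq_swap).trans h)))
  loopless := ⟨fun i h => h.1 rfl⟩

/-- The incidence chromatic number of a graph: the least number of colors in a proper
coloring of its incidences. -/
noncomputable def incidenceChromaticNumber {V : Type*} (G : SimpleGraph V) : ℕ∞ :=
  (incidenceGraph G).chromaticNumber

/-- The square of a graph `G`: distinct vertices are adjacent iff they are at distance
at most 2 in `G`. -/
def SimpleGraph.square {V : Type*} (G : SimpleGraph V) : SimpleGraph V where
  Adj u v := u ≠ v ∧ (G.Adj u v ∨ ∃ w, G.Adj u w ∧ G.Adj w v)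
  symm := by
    refine ⟨?_⟩
    rintro u v ⟨hne, h | ⟨w, h1, h2⟩⟩
    · exact ⟨hne.symm, Or.inl h.symm⟩
    · exact ⟨hne.symm, Or.inr ⟨w, h2.symm, h1.symm⟩⟩
  loopless := ⟨fun v h => h.1 rfl⟩

/-- The toroidal grid `T_{m,n} = C_m □ C_n`. -/
def toroidalGrid (m n : ℕ) : SimpleGraph (Fin m × Fin n) :=
  SimpleGraph.boxProd (SimpleGraph.cycleGraph m) (SimpleGraph.cycleGraph n)

/-! Colour the incidence `(v, e)` by the colour, in a proper colouring of `G²`, of the endpoint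
of `e` other than `v`. If two incidences are adjacent, their far endpoints are distinct and at
distance at most 2 in `G`, so this incidence colouring is proper: the far-endpoint map is a graph
homomorphism from the incidence graph of `G` to `G²`. -/

namespace SimpleGraph

variable {V : Type*} {G : SimpleGraph V} {u v w : V}

theorem square_adj_of_adj (h : G.Adj u v) : G.square.Adj u v :=
  ⟨h.ne, Or.inl h⟩

theorem square_adj_of_adj_of_adj (huv : u ≠ v) (huw : G.Adj u w) (hwv : G.Adj w v) :
    G.square.Adj u v :=
  ⟨huv, Or.inr ⟨w, huw, hwv⟩⟩

end SimpleGraph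

namespace Incidence

variable {V : Type*} {G : SimpleGraph V}

noncomputable def other (i : Incidence G) : V :=
  Sym2.Mem.other i.2.2

theorem other_spec (i : Incidence G) : s(i.1.1, i.other) = i.1.2 :=
  Sym2.other_spec i.2.2

theorem adj_other (i : Incidence G) : G.Adj i.1.1 i.other := by
  rw [← G.mem_edgeSet, other_spec]
  exact i.2.1

theorem ext_of_other {i j : Incidence G} (hv : i.1.1 = j.1.1) (ho : i.other = j.other) :
    i = j :=
  Subtype.ext (Prod.ext hv (by rw [← other_spec, ← other_spec, hv, ho]))

theorem square_adj_other_of_adj {i j : Incidence G} (h : (incidenceGraph G).Adj i j) :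
    G.square.Adj i.other j.other := by
  obtain ⟨hne, hv | he | hi | hj⟩ := h
  · exact square_adj_of_adj_of_adj (fun ho => hne (ext_of_other hv ho)) i.adj_other.symm
      (hv ▸ j.adj_other)
  · rw [← i.other_spec, ← j.other_spec] at he
    obtain ⟨hv, ho⟩ | ⟨hvo, hov⟩ := Sym2.eq_iff.mp he
    · exact absurd (ext_of_other hv ho) hne
    · rw [← hvo, hov]
      exact square_adj_of_adj (hov ▸ i.adj_other.symm)
  · rw [← i.other_spec, Sym2.congr_right] at hi
    rw [← hi]
    exact square_adj_of_adj j.adj_other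
  · rw [← j.other_spec, Sym2.eq_swap, Sym2.congr_right] at hj
    rw [← hj]
    exact square_adj_of_adj i.adj_other.symm

noncomputable def otherHom (G : SimpleGraph V) : incidenceGraph G →g G.square :=
  ⟨other, square_adj_other_of_adj⟩

end Incidence

theorem incidence_chromatic_le_chromatic_square_general {V : Type*}
    (G : SimpleGraph V) :
    incidenceChromaticNumber G ≤ G.square.chromaticNumber :=
  chromaticNumber_mono_of_hom (Incidence.otherHom G)

theorem incidence_chromatic_le_chromatic_square {V : Type*} [Fintype V]
    (G : SimpleGraph V) :
    incidenceChromaticNumber G ≤ G.square.chromaticNumber :=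
  incidence_chromatic_le_chromatic_square_general G
end

section
/- For every integer k ≥ 1 and every integer n ≥ 5 with n ≠ 7, the chromatic number of the square of the toroidal grid satisfies χ(T_{5k,n}²) ≤ 6. -/
open SimpleGraph

/-! Reducing the first coordinate modulo 5 maps `T_{5k,n}` onto `T_{5,n}` and keeps vertices at
distance at most two apart, so it is a homomorphism of squares and it suffices to colour
`T_{5,n}²`. A colouring of `(G □ C_n)²` amounts to a cyclic word of colourings of the columns
`G × {b}` in which every three consecutive columns satisfy local constraints. For `G = C_5` and
6 colours there are such words of lengths 5, 6, 8 and 9 sharing their first two columns; words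
with a common two-column prefix can be concatenated, and every `n ≥ 5` other than 7 is a sum of
5, 6, 8 and 9. -/

theorem Fin.add_one_ne_self {d : ℕ} [NeZero d] (hd : 2 ≤ d) (x : Fin d) : x + 1 ≠ x := by
  obtain ⟨d, rfl⟩ := Nat.exists_eq_add_of_le' hd
  simp

theorem Fin.add_one_add_one_ne_self {d : ℕ} [NeZero d] (hd : 3 ≤ d) (x : Fin d) :
    x + 1 + 1 ≠ x := by
  obtain ⟨d, rfl⟩ := Nat.exists_eq_add_of_le' hd
  rw [add_assoc, Ne, add_eq_left]
  simp [Fin.ext_iff, Fin.val_add, Nat.mod_eq_of_lt (show 2 < d + 3 by omega)]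

theorem Fin.ofNat_val_add_one {m d : ℕ} [NeZero m] [NeZero d] (hdm : d ∣ m) (a : Fin m) :
    Fin.ofNat d (a + 1).val = Fin.ofNat d a.val + 1 := by
  simp [Fin.ext_iff, Fin.val_add, Nat.mod_mod_of_dvd _ hdm, Nat.add_mod]

namespace List

variable {α : Type*}

def IsChain3 (P : α → α → α → Prop) (l : List α) : Prop :=
  ∀ i (h : i < l.length - 2), P l[i] l[i + 1] l[i + 2]

instance (P : α → α → α → Prop) [∀ a b c, Decidable (P a b c)] (l : List α) :
    Decidable (IsChain3 P l) := by
  unfold IsChain3; infer_instance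

def IsCyclicChain3 (P : α → α → α → Prop) (l : List α) : Prop := IsChain3 P (l ++ l.take 2)

instance (P : α → α → α → Prop) [∀ a b c, Decidable (P a b c)] (l : List α) :
    Decidable (IsCyclicChain3 P l) := by
  unfold IsCyclicChain3; infer_instance

theorem getElem_append_take_eq_getElem_mod {l : List α} {k j : ℕ} (hk : k ≤ l.length)
    (hj : j < l.length + k) :
    (l ++ l.take k)[j]'(by simp; omega) = l[j % l.length]'(Nat.mod_lt _ (by omega)) := by
  rw [getElem_append]
  split_ifs with h
  · simp [Nat.mod_eq_of_lt h]
  · simp [Nat.mod_eq_sub_mod (not_lt.1 h),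
      Nat.mod_eq_of_lt (show j - l.length < l.length by omega)]

variable {P : α → α → α → Prop}

theorem IsChain3.append_cons_cons {l₁ l₂ : List α} {x y : α} (h₁ : IsChain3 P (l₁ ++ [x, y]))
    (h₂ : IsChain3 P (x :: y :: l₂)) : IsChain3 P (l₁ ++ x :: y :: l₂) := by
  intro i hi
  simp only [length_append, length_cons] at hi
  by_cases hil : i < l₁.length
  · have := h₁ i (by simp; omega)
    simp only [getElem_append] at this ⊢
    grind
  · have := h₂ (i - l₁.length) (by simp; omega)
    simp only [getElem_append] at this ⊢
    grind

theorem IsCyclicChain3.append {x y : α} {u v : List α} (hu : IsCyclicChain3 P (x :: y :: u))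
    (hv : IsCyclicChain3 P (x :: y :: v)) : IsCyclicChain3 P (x :: y :: (u ++ x :: y :: v)) := by
  unfold IsCyclicChain3 at *
  simpa using hu.append_cons_cons (l₂ := v ++ [x, y]) (by simpa using hv)

theorem IsCyclicChain3.getElem_fin {l : List α} (h : IsCyclicChain3 P l) [NeZero l.length]
    (hl : 2 ≤ l.length) (b : Fin l.length) : P l[b] l[b + 1] l[b + 1 + 1] := by
  have hb := h b (by simp; omega)
  simp only [getElem_append_take_eq_getElem_mod (k := 2) hl (show b.val < l.length + 2 by omega),
    getElem_append_take_eq_getElem_mod (k := 2) hl (show b.val + 1 < l.length + 2 by omega),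
    getElem_append_take_eq_getElem_mod (k := 2) hl (show b.val + 2 < l.length + 2 by omega)] at hb
  have h₁ : (b + 1).val = (b.val + 1) % l.length := by
    rw [Fin.val_add, Fin.val_one', Nat.add_mod_mod]
  have h₂ : (b + 1 + 1).val = (b.val + 2) % l.length := by
    rw [Fin.val_add, h₁, Fin.val_one', Nat.add_mod_mod, Nat.mod_add_mod]
  simpa only [Fin.getElem_fin, h₁, h₂, Nat.mod_eq_of_lt b.isLt] using hb

end List

namespace SimpleGraph

variable {V W V' W' α : Type*} {G : SimpleGraph V} {H : SimpleGraph W}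
  {G' : SimpleGraph V'} {H' : SimpleGraph W'}

instance [Fintype V] [DecidableEq V] [DecidableRel G.Adj] : DecidableRel G.square.Adj :=
  fun u v => inferInstanceAs (Decidable (u ≠ v ∧ (G.Adj u v ∨ ∃ w, G.Adj u w ∧ G.Adj w v)))

theorem Adj.square {u v : V} (h : G.Adj u v) : G.square.Adj u v := ⟨G.ne_of_adj h, Or.inl h⟩

theorem square_boxProd_adj_cases {u v : V} {x y : W}
    (h : (G.boxProd H).square.Adj (u, x) (v, y)) :
    (x = y ∧ G.square.Adj u v) ∨ (G.Adj u v ∧ H.Adj x y) ∨ (u = v ∧ H.square.Adj x y) := by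
  obtain ⟨hne, h | ⟨⟨w, z⟩, h₁, h₂⟩⟩ := h
  · rcases boxProd_adj.1 h with ⟨h, rfl⟩ | ⟨h, rfl⟩
    · exact Or.inl ⟨rfl, h.square⟩
    · exact Or.inr (Or.inr ⟨rfl, h.square⟩)
  · rw [boxProd_adj] at h₁ h₂
    rcases h₁ with ⟨h₁, rfl⟩ | ⟨h₁, rfl⟩ <;> rcases h₂ with ⟨h₂, rfl⟩ | ⟨h₂, rfl⟩
    · exact Or.inl ⟨rfl, fun huv => hne (huv ▸ rfl), Or.inr ⟨w, h₁, h₂⟩⟩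
    · exact Or.inr (Or.inl ⟨h₁, h₂⟩)
    · exact Or.inr (Or.inl ⟨h₂, h₁⟩)
    · exact Or.inr (Or.inr ⟨rfl, fun hxy => hne (hxy ▸ rfl), Or.inr ⟨z, h₁, h₂⟩⟩)

def Hom.square (f : G →g G') (hf : ∀ ⦃u v⦄, G.square.Adj u v → f u ≠ f v) :
    G.square →g G'.square where
  toFun := f
  map_rel' h := ⟨hf h, h.2.imp f.map_adj fun ⟨w, h₁, h₂⟩ => ⟨f w, f.map_adj h₁, f.map_adj h₂⟩⟩

def Hom.boxProdMap (f : G →g G') (g : H →g H') : G.boxProd H →g G'.boxProd H' where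
  toFun := Prod.map f g
  map_rel' h := by
    rcases boxProd_adj.1 h with ⟨h, he⟩ | ⟨h, he⟩
    · exact boxProd_adj.2 (Or.inl ⟨f.map_adj h, congrArg g he⟩)
    · exact boxProd_adj.2 (Or.inr ⟨g.map_adj h, congrArg f he⟩)

theorem Hom.boxProdMap_ne_of_square_adj {f : G →g G'} {g : H →g H'}
    (hf : ∀ ⦃u v⦄, G.square.Adj u v → f u ≠ f v) (hg : ∀ ⦃x y⦄, H.square.Adj x y → g x ≠ g y)
    ⦃p q : V × W⦄ (h : (G.boxProd H).square.Adj p q) : f.boxProdMap g p ≠ f.boxProdMap g q := by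
  obtain ⟨u, x⟩ := p
  obtain ⟨v, y⟩ := q
  intro he
  replace he : f u = f v ∧ g x = g y := Prod.ext_iff.1 he
  rcases square_boxProd_adj_cases h with ⟨-, h⟩ | ⟨h, -⟩ | ⟨-, h⟩
  · exact hf h he.1
  · exact hf h.square he.1
  · exact hg h he.2

theorem cycleGraph_adj_iff_eq_add_one {n : ℕ} [NeZero n] (hn : 2 ≤ n) {u v : Fin n} :
    (cycleGraph n).Adj u v ↔ u = v + 1 ∨ v = u + 1 := by
  obtain ⟨n, rfl⟩ := Nat.exists_eq_add_of_le' hn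
  simp [cycleGraph_adj, sub_eq_iff_eq_add, add_comm]

theorem cycleGraph_square_adj {n : ℕ} [NeZero n] (hn : 2 ≤ n) {u v : Fin n}
    (h : (cycleGraph n).square.Adj u v) :
    v = u + 1 ∨ u = v + 1 ∨ v = u + 1 + 1 ∨ u = v + 1 + 1 := by
  obtain ⟨hne, h | ⟨w, h₁, h₂⟩⟩ := h
  · rw [cycleGraph_adj_iff_eq_add_one hn] at h
    tauto
  · rw [cycleGraph_adj_iff_eq_add_one hn] at h₁ h₂
    rcases h₁ with rfl | rfl <;> rcases h₂ with h₂ | h₂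
    · exact .inr (.inr (.inr (by rw [h₂])))
    · exact absurd h₂.symm hne
    · exact absurd (add_right_cancel h₂.symm).symm hne
    · exact .inr (.inr (.inl h₂))

def cycleGraphCover {m d : ℕ} [NeZero m] [NeZero d] (hd : 2 ≤ d) (hdm : d ∣ m) :
    cycleGraph m →g cycleGraph d where
  toFun a := Fin.ofNat d a
  map_rel' {a b} h := by
    have hm : 2 ≤ m := hd.trans (Nat.le_of_dvd (NeZero.pos m) hdm)
    rw [cycleGraph_adj_iff_eq_add_one hm] at h
    rw [cycleGraph_adj_iff_eq_add_one hd]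
    rcases h with rfl | rfl <;> simp only [Fin.ofNat_val_add_one hdm] <;> tauto

theorem cycleGraphCover_ne_of_square_adj {m d : ℕ} [NeZero m] [NeZero d] (hd : 3 ≤ d)
    (hdm : d ∣ m) ⦃u v : Fin m⦄ (h : (cycleGraph m).square.Adj u v) :
    cycleGraphCover (by omega) hdm u ≠ cycleGraphCover (by omega) hdm v := by
  have hm : 2 ≤ m := (show 2 ≤ d by omega).trans (Nat.le_of_dvd (NeZero.pos m) hdm)
  simp only [cycleGraphCover, RelHom.coeFn_mk]
  rcases cycleGraph_square_adj hm h with rfl | rfl | rfl | rfl <;>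
    simp only [Fin.ofNat_val_add_one hdm]
  · exact (Fin.add_one_ne_self (by omega) _).symm
  · exact Fin.add_one_ne_self (by omega) _
  · exact (Fin.add_one_add_one_ne_self hd _).symm
  · exact Fin.add_one_add_one_ne_self hd _

def squareBoxProdColoring (cols : W → V → α)
    (hG : ∀ x u v, G.square.Adj u v → cols x u ≠ cols x v)
    (hGH : ∀ x y u v, H.Adj x y → G.Adj u v → cols x u ≠ cols y v)
    (hH : ∀ x y u, H.square.Adj x y → cols x u ≠ cols y u) :
    (G.boxProd H).square.Coloring α :=
  Coloring.mk (fun p => cols p.2 p.1) fun {p q} h => by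
    obtain ⟨u, x⟩ := p
    obtain ⟨v, y⟩ := q
    rcases square_boxProd_adj_cases h with ⟨rfl, huv⟩ | ⟨huv, hxy⟩ | ⟨rfl, hxy⟩
    · exact hG x u v huv
    · exact hGH x y u v hxy huv
    · exact hH x y u hxy

/-- The constraints that three consecutive columns `c`, `d`, `e` of a colouring of
`(G □ C_n)²` must satisfy. -/
def IsColumnWindow (G : SimpleGraph V) (c d e : V → α) : Prop :=
  (∀ u v, G.square.Adj u v → c u ≠ c v) ∧ (∀ u v, G.Adj u v → c u ≠ d v) ∧
    (∀ u, c u ≠ d u) ∧ ∀ u, c u ≠ e u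

instance [Fintype V] [DecidableEq V] [DecidableRel G.Adj] [DecidableEq α] (c d e : V → α) :
    Decidable (IsColumnWindow G c d e) := by
  unfold IsColumnWindow; infer_instance

def squareBoxProdCycleGraphColoring {n : ℕ} [NeZero n] (hn : 2 ≤ n) (cols : Fin n → V → α)
    (h : ∀ b, IsColumnWindow G (cols b) (cols (b + 1)) (cols (b + 1 + 1))) :
    (G.boxProd (cycleGraph n)).square.Coloring α :=
  squareBoxProdColoring cols (fun x => (h x).1)
    (fun x y u v hxy huv => by
      rcases (cycleGraph_adj_iff_eq_add_one hn).1 hxy with rfl | rfl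
      · exact ((h y).2.1 v u huv.symm).symm
      · exact (h x).2.1 u v huv)
    (fun x y u hxy => by
      rcases cycleGraph_square_adj hn hxy with rfl | rfl | rfl | rfl
      · exact (h x).2.2.1 u
      · exact ((h y).2.2.1 u).symm
      · exact (h x).2.2.2 u
      · exact ((h y).2.2.2 u).symm)

theorem exists_isCyclicChain3_isColumnWindow_cycleGraph_five {n : ℕ} (hn : 5 ≤ n)
    (hn7 : n ≠ 7) :
    ∃ u : List (Fin 5 → Fin 6), u.length + 2 = n ∧
      (![0, 1, 2, 3, 4] :: ![2, 3, 0, 5, 1] :: u).IsCyclicChain3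
        (IsColumnWindow (cycleGraph 5)) := by
  have base : ∀ m ∈ ({5, 6, 8, 9} : Finset ℕ), ∃ u : List (Fin 5 → Fin 6), u.length + 2 = m ∧
      (![0, 1, 2, 3, 4] :: ![2, 3, 0, 5, 1] :: u).IsCyclicChain3
        (IsColumnWindow (cycleGraph 5)) := by
    simp only [Finset.mem_insert, Finset.mem_singleton, forall_eq_or_imp, forall_eq]
    refine ⟨⟨[![4, 5, 1, 2, 3], ![1, 2, 3, 0, 5], ![3, 4, 5, 1, 2]], rfl, by decide⟩,
      ⟨[![5, 4, 1, 2, 0], ![1, 0, 5, 4, 3], ![4, 2, 3, 1, 5], ![3, 5, 4, 0, 2]], rfl, by decide⟩,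
      ⟨[![5, 4, 1, 2, 0], ![1, 0, 5, 3, 4], ![2, 3, 4, 1, 5], ![4, 1, 0, 2, 3], ![5, 2, 3, 4, 1],
        ![3, 4, 5, 0, 2]], rfl, by decide⟩,
      ⟨[![4, 5, 1, 2, 3], ![0, 2, 3, 4, 5], ![3, 1, 5, 0, 2], ![5, 0, 4, 3, 1], ![4, 3, 1, 2, 0],
        ![1, 2, 0, 4, 5], ![3, 4, 5, 1, 2]], rfl, by decide⟩⟩
  induction n using Nat.strong_induction_on with
  | _ n ih =>
    by_cases hn9 : n ≤ 9
    · exact base n (by simp; omega)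
    obtain ⟨a, ha, hna⟩ : ∃ a ∈ ({5, 6, 8, 9} : Finset ℕ), 5 ≤ n - a ∧ n - a ≠ 7 :=
      if hn12 : n = 12 then ⟨6, by simp, by omega⟩ else ⟨5, by simp, by omega⟩
    obtain ⟨u, hu, hu'⟩ := base a ha
    obtain ⟨v, hv, hv'⟩ := ih (n - a) (by omega) hna.1 hna.2
    exact ⟨u ++ _ :: _ :: v, by simp; omega, hu'.append hv'⟩

theorem chromaticNumber_square_toroidalGrid_five_le {n : ℕ} (hn : 5 ≤ n) (hn7 : n ≠ 7) :
    (toroidalGrid 5 n).square.chromaticNumber ≤ 6 := by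
  obtain ⟨u, rfl, hu⟩ := exists_isCyclicChain3_isColumnWindow_cycleGraph_five hn hn7
  set l := ![0, 1, 2, 3, 4] :: ![2, 3, 0, 5, 1] :: u
  have hl : 2 ≤ l.length := by simp [l]
  exact Colorable.chromaticNumber_le
    ⟨squareBoxProdCycleGraphColoring hl (fun b => l[b]) (hu.getElem_fin hl)⟩

end SimpleGraph

theorem chromatic_square_toroidal_grid_five_k (k n : ℕ) (hk : 1 ≤ k) (hn : 5 ≤ n)
    (hn7 : n ≠ 7) :
    (toroidalGrid (5 * k) n).square.chromaticNumber ≤ 6 := by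
  have : NeZero (5 * k) := ⟨by omega⟩
  have cover : (toroidalGrid (5 * k) n).square →g (toroidalGrid 5 n).square :=
    ((cycleGraphCover (by norm_num) (dvd_mul_right 5 k)).boxProdMap Hom.id).square
      (Hom.boxProdMap_ne_of_square_adj (cycleGraphCover_ne_of_square_adj (by norm_num) _)
        fun _ _ h => h.1)
  exact (chromaticNumber_mono_of_hom cover).trans
    (chromaticNumber_square_toroidalGrid_five_le hn hn7)
end
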